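/- arXiv:2303.00578 — 2 statements merged into one kernel-verified Lean document; each statement's English description precedes it below -/
import Mathlib

section
/- Let A ≅ ℝ^ℓ act smoothly and locally freely on a compact manifold M, with commuting generating vector fields X_H (H ∈ 𝔞), and suppose some H₀ ∈ 𝔞 is transversely hyperbolic with splitting TM = E₀ ⊕ E_u ⊕ E_s. Then the set of H ∈ 𝔞 that are transversely hyperbolic with the same splitting is an open convex cone in 𝔞 containing H₀. -/
/-- A parameter `H ∈ 𝔞` is *transversely hyperbolic* for the Anosov action with
derivative cocycle `d`, flow `φ` and splitting data `Es`, `Eu` if there are `C, ν > 0`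
such that the differential of the time-`t` flow of `X_H` contracts the stable bundle
`Es` at rate `C e^{−νt}` for `t ≥ 0` and the unstable bundle `Eu` at rate `C e^{−ν|t|}`
for `t ≤ 0`. -/
def TransverselyHyperbolic {𝔞 M F : Type*} [NormedAddCommGroup 𝔞] [NormedSpace ℝ 𝔞]
    [NormedAddCommGroup F] [NormedSpace ℝ F]
    (φ : 𝔞 → M → M) (d : 𝔞 → M → (F →L[ℝ] F))
    (Es Eu : M → Submodule ℝ F) (H : 𝔞) : Prop :=
  ∃ C > (0 : ℝ), ∃ ν > (0 : ℝ),
    (∀ (x : M) (t : ℝ), 0 ≤ t → ∀ w ∈ Es x,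
      ‖d (t • H) x w‖ ≤ C * Real.exp (-ν * t) * ‖w‖) ∧
    (∀ (x : M) (t : ℝ), t ≤ 0 → ∀ w ∈ Eu x,
      ‖d (t • H) x w‖ ≤ C * Real.exp (-ν * |t|) * ‖w‖)

/-! The cone property and convexity come from the cocycle identity: along `c • H` time is
rescaled by `c`, and along `H₁ + H₂` the two contractions compose, their rates adding up.
Openness is the robust part. For `H'` near `H`, the flows of `H'` and `H` differ on a time
window `[0, T]` only by a short time of the action, which distorts norms at most by a factor
`2`. Choosing `T` so large that `2 C e^{-νT} ≤ e^{-νT/2}`, the time-`T` map of `H'` contracts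
with constant `1`, so iterating the window along the cocycle gives exponential contraction
for all times, at half the rate. The unstable bundle is handled as the stable bundle of `-H`. -/

open Real Filter Topology

section ExpContracts

variable {𝔞 M F : Type*} [NormedAddCommGroup 𝔞] [NormedSpace ℝ 𝔞]
  [NormedAddCommGroup F] [NormedSpace ℝ F]

def ExpContracts (d : 𝔞 → M → (F →L[ℝ] F)) (E : M → Submodule ℝ F) (H : 𝔞) (C ν : ℝ) :
    Prop :=
  ∀ (x : M) (t : ℝ), 0 ≤ t → ∀ w ∈ E x, ‖d (t • H) x w‖ ≤ C * exp (-ν * t) * ‖w‖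

variable {φ : 𝔞 → M → M} {d : 𝔞 → M → (F →L[ℝ] F)} {E : M → Submodule ℝ F}

theorem transverselyHyperbolic_iff_expContracts {Es Eu : M → Submodule ℝ F} {H : 𝔞} :
    TransverselyHyperbolic φ d Es Eu H ↔
      ∃ C > (0 : ℝ), ∃ ν > (0 : ℝ), ExpContracts d Es H C ν ∧ ExpContracts d Eu (-H) C ν := by
  rw [TransverselyHyperbolic]
  refine exists_congr fun C ↦ and_congr_right fun _ ↦ exists_congr fun ν ↦
    and_congr_right fun _ ↦ and_congr Iff.rfl ⟨?_, ?_⟩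
  · intro h x t ht w hw
    simpa [abs_of_nonneg ht] using h x (-t) (by linarith) w hw
  · intro h x t ht w hw
    simpa [abs_of_nonpos ht] using h x (-t) (by linarith) w hw

theorem ExpContracts.smul {H : 𝔞} {C ν c : ℝ} (h : ExpContracts d E H C ν) (hc : 0 ≤ c) :
    ExpContracts d E (c • H) C (c * ν) := by
  intro x t ht w hw
  rw [smul_smul, show -(c * ν) * t = -ν * (t * c) by ring]
  exact h x (t * c) (mul_nonneg ht hc) w hw

variable (hd : ∀ (a b : 𝔞) (x : M), d (a + b) x = (d a (φ b x)).comp (d b x))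
  (hE : ∀ (a : 𝔞) (x : M), ∀ w ∈ E x, d a x w ∈ E (φ a x))
include hd hE

theorem ExpContracts.add {H₁ H₂ : 𝔞} {C₁ C₂ ν₁ ν₂ : ℝ} (hC₁ : 0 ≤ C₁)
    (h₁ : ExpContracts d E H₁ C₁ ν₁) (h₂ : ExpContracts d E H₂ C₂ ν₂) :
    ExpContracts d E (H₁ + H₂) (C₁ * C₂) (ν₁ + ν₂) := by
  intro x t ht w hw
  rw [smul_add, hd, ContinuousLinearMap.comp_apply]
  calc ‖d (t • H₁) (φ (t • H₂) x) (d (t • H₂) x w)‖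
      ≤ C₁ * exp (-ν₁ * t) * ‖d (t • H₂) x w‖ := h₁ _ t ht _ (hE _ x w hw)
    _ ≤ C₁ * exp (-ν₁ * t) * (C₂ * exp (-ν₂ * t) * ‖w‖) := by gcongr; exact h₂ x t ht w hw
    _ = C₁ * C₂ * exp (-(ν₁ + ν₂) * t) * ‖w‖ := by
      rw [neg_add, add_mul, exp_add]; ring

theorem ExpContracts.of_window {H : 𝔞} {C ν T : ℝ} (hT : 0 < T)
    (hwindow : ∀ (x : M) (t : ℝ), 0 ≤ t → t ≤ T → ∀ w ∈ E x,
      ‖d (t • H) x w‖ ≤ C * exp (-ν * t) * ‖w‖)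
    (hstep : ∀ x : M, ∀ w ∈ E x, ‖d (T • H) x w‖ ≤ exp (-ν * T) * ‖w‖) :
    ExpContracts d E H C ν := by
  have hlong : ∀ n : ℕ, ∀ (x : M) (t : ℝ), 0 ≤ t → t ≤ n * T + T → ∀ w ∈ E x,
      ‖d (t • H) x w‖ ≤ C * exp (-ν * t) * ‖w‖ := by
    intro n
    induction n with
    | zero => simpa using hwindow
    | succ n ih =>
      intro x t ht htn w hw
      rcases le_total t T with htT | hTt
      · exact hwindow x t ht htT w hw
      have hsplit : t • H = T • H + (t - T) • H := by rw [← add_smul, add_sub_cancel]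
      rw [hsplit, hd, ContinuousLinearMap.comp_apply]
      calc ‖d (T • H) (φ ((t - T) • H) x) (d ((t - T) • H) x w)‖
          ≤ exp (-ν * T) * ‖d ((t - T) • H) x w‖ := hstep _ _ (hE _ x w hw)
        _ ≤ exp (-ν * T) * (C * exp (-ν * (t - T)) * ‖w‖) := by
          gcongr
          exact ih x (t - T) (by linarith) (by push_cast at htn; linarith) w hw
        _ = C * (exp (-ν * T) * exp (-ν * (t - T))) * ‖w‖ := by ring
        _ = C * exp (-ν * t) * ‖w‖ := by rw [← exp_add]; ring_nf
  intro x t ht w hw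
  obtain ⟨n, hn⟩ := exists_nat_ge (t / T)
  refine hlong n x t ht ?_ w hw
  have : t ≤ n * T := (div_le_iff₀ hT).mp hn
  linarith

theorem ExpContracts.eventually_nhds {η : ℝ} (hη : 0 < η)
    (hη_dist : ∀ a : 𝔞, ‖a‖ < η → ∀ (x : M) (w : F), ‖d a x w‖ ≤ 2 * ‖w‖)
    {H : 𝔞} {C ν : ℝ} (hC : 0 < C) (hν : 0 < ν) (h : ExpContracts d E H C ν) :
    ∀ᶠ H' in 𝓝 H, ExpContracts d E H' (2 * C) (ν / 2) := by
  set T := 4 * C / ν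
  have hT : 0 < T := by positivity
  have hT_step : 2 * C * exp (-(ν / 2) * T) ≤ 1 := by
    have hνT : ν / 2 * T = 2 * C := by simp only [T]; field_simp; ring
    rw [neg_mul, hνT, exp_neg, mul_inv_le_iff₀ (exp_pos _), one_mul]
    linarith [add_one_le_exp (2 * C)]
  filter_upwards [Metric.ball_mem_nhds H (div_pos hη hT)] with H' hH'
  have hwindow : ∀ (x : M) (t : ℝ), 0 ≤ t → t ≤ T → ∀ w ∈ E x,
      ‖d (t • H') x w‖ ≤ 2 * C * exp (-ν * t) * ‖w‖ := by
    intro x t ht htT w hw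
    have hshort : ‖t • (H' - H)‖ < η := by
      rw [Metric.mem_ball, dist_eq_norm] at hH'
      rw [norm_smul, Real.norm_of_nonneg ht]
      calc t * ‖H' - H‖ ≤ T * ‖H' - H‖ := by gcongr
        _ < T * (η / T) := by gcongr
        _ = η := by field_simp
    have hsplit : t • H' = t • (H' - H) + t • H := by rw [← smul_add, sub_add_cancel]
    rw [hsplit, hd, ContinuousLinearMap.comp_apply]
    calc _ ≤ 2 * ‖d (t • H) x w‖ := hη_dist _ hshort _ _
      _ ≤ 2 * (C * exp (-ν * t) * ‖w‖) := by gcongr; exact h x t ht w hw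
      _ = 2 * C * exp (-ν * t) * ‖w‖ := by ring
  refine ExpContracts.of_window hd hE hT (fun x t ht htT w hw ↦ ?_) (fun x w hw ↦ ?_)
  · calc _ ≤ 2 * C * exp (-ν * t) * ‖w‖ := hwindow x t ht htT w hw
      _ ≤ 2 * C * exp (-(ν / 2) * t) * ‖w‖ := by gcongr; nlinarith
  · calc _ ≤ 2 * C * exp (-ν * T) * ‖w‖ := hwindow x T hT.le le_rfl w hw
      _ = 2 * C * exp (-(ν / 2) * T) * exp (-(ν / 2) * T) * ‖w‖ := by
        rw [mul_assoc (2 * C) (exp _) (exp _), ← exp_add]; ring_nf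
      _ ≤ 1 * exp (-(ν / 2) * T) * ‖w‖ := by gcongr
      _ = exp (-(ν / 2) * T) * ‖w‖ := by rw [one_mul]

end ExpContracts

section WeylChamber

variable {𝔞 M F : Type*} [NormedAddCommGroup 𝔞] [NormedSpace ℝ 𝔞]
  [NormedAddCommGroup F] [NormedSpace ℝ F]
  {φ : 𝔞 → M → M} {d : 𝔞 → M → (F →L[ℝ] F)} {Es Eu : M → Submodule ℝ F}

theorem TransverselyHyperbolic.smul {H : 𝔞} {c : ℝ} (h : TransverselyHyperbolic φ d Es Eu H)
    (hc : 0 < c) : TransverselyHyperbolic φ d Es Eu (c • H) := by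
  obtain ⟨C, hC, ν, hν, hs, hu⟩ := transverselyHyperbolic_iff_expContracts.1 h
  refine transverselyHyperbolic_iff_expContracts.2
    ⟨C, hC, c * ν, by positivity, hs.smul hc.le, ?_⟩
  rw [← smul_neg]
  exact hu.smul hc.le

variable (hd : ∀ (a b : 𝔞) (x : M), d (a + b) x = (d a (φ b x)).comp (d b x))
  (hEs : ∀ (a : 𝔞) (x : M), ∀ w ∈ Es x, d a x w ∈ Es (φ a x))
  (hEu : ∀ (a : 𝔞) (x : M), ∀ w ∈ Eu x, d a x w ∈ Eu (φ a x))
include hd hEs hEu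

theorem TransverselyHyperbolic.add {H₁ H₂ : 𝔞} (h₁ : TransverselyHyperbolic φ d Es Eu H₁)
    (h₂ : TransverselyHyperbolic φ d Es Eu H₂) : TransverselyHyperbolic φ d Es Eu (H₁ + H₂) := by
  obtain ⟨C₁, hC₁, ν₁, hν₁, hs₁, hu₁⟩ := transverselyHyperbolic_iff_expContracts.1 h₁
  obtain ⟨C₂, hC₂, ν₂, hν₂, hs₂, hu₂⟩ := transverselyHyperbolic_iff_expContracts.1 h₂
  refine transverselyHyperbolic_iff_expContracts.2
    ⟨C₁ * C₂, by positivity, ν₁ + ν₂, by positivity, hs₁.add hd hEs hC₁.le hs₂, ?_⟩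
  rw [neg_add]
  exact hu₁.add hd hEu hC₁.le hu₂

def weylChamber : ConvexCone ℝ 𝔞 where
  carrier := {H | TransverselyHyperbolic φ d Es Eu H}
  smul_mem' _ hc _ hH := TransverselyHyperbolic.smul (φ := φ) hH hc
  add_mem' _ h₁ _ h₂ := TransverselyHyperbolic.add hd hEs hEu h₁ h₂

theorem isOpen_setOf_transverselyHyperbolic
    (hsmall : ∀ ε > (0 : ℝ), ∃ η > (0 : ℝ), ∀ a : 𝔞, ‖a‖ < η →
      ∀ (x : M) (w : F), ‖d a x w‖ ≤ (1 + ε) * ‖w‖) :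
    IsOpen {H : 𝔞 | TransverselyHyperbolic φ d Es Eu H} := by
  refine isOpen_iff_mem_nhds.2 fun H (hH : TransverselyHyperbolic φ d Es Eu H) ↦ ?_
  obtain ⟨C, hC, ν, hν, hs, hu⟩ := transverselyHyperbolic_iff_expContracts.1 hH
  obtain ⟨η, hη, hη_dist⟩ := hsmall 1 one_pos
  norm_num at hη_dist
  filter_upwards [hs.eventually_nhds hd hEs hη hη_dist hC hν,
    (tendsto_neg H).eventually (hu.eventually_nhds hd hEu hη hη_dist hC hν)] with H' hs' hu'
  exact transverselyHyperbolic_iff_expContracts.2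
    ⟨2 * C, by positivity, ν / 2, by positivity, hs', hu'⟩

end WeylChamber

theorem weyl_chamber_open_convex_cone_general
    {𝔞 M F : Type*} [NormedAddCommGroup 𝔞] [NormedSpace ℝ 𝔞]
    [NormedAddCommGroup F] [NormedSpace ℝ F]
    (φ : 𝔞 → M → M)
    (d : 𝔞 → M → (F →L[ℝ] F))
    (hd : ∀ (a b : 𝔞) (x : M), d (a + b) x = (d a (φ b x)).comp (d b x))
    (Es Eu : M → Submodule ℝ F)
    (hEs : ∀ (a : 𝔞) (x : M), ∀ w ∈ Es x, d a x w ∈ Es (φ a x))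
    (hEu : ∀ (a : 𝔞) (x : M), ∀ w ∈ Eu x, d a x w ∈ Eu (φ a x))
    (hsmall : ∀ ε > (0 : ℝ), ∃ η > (0 : ℝ), ∀ a : 𝔞, ‖a‖ < η →
      ∀ (x : M) (w : F), ‖d a x w‖ ≤ (1 + ε) * ‖w‖)
    (H₀ : 𝔞) (hH₀ : TransverselyHyperbolic φ d Es Eu H₀) :
    H₀ ∈ {H : 𝔞 | TransverselyHyperbolic φ d Es Eu H} ∧
    IsOpen {H : 𝔞 | TransverselyHyperbolic φ d Es Eu H} ∧
    Convex ℝ {H : 𝔞 | TransverselyHyperbolic φ d Es Eu H} ∧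
    ∀ c : ℝ, 0 < c → ∀ H, TransverselyHyperbolic φ d Es Eu H →
      TransverselyHyperbolic φ d Es Eu (c • H) :=
  ⟨hH₀, isOpen_setOf_transverselyHyperbolic hd hEs hEu hsmall,
    (weylChamber hd hEs hEu).convex, fun _ hc _ hH ↦ hH.smul hc⟩

/-- **The positive Weyl chamber of an Anosov action.**  Let `A ≅ ℝ^ℓ` (with Lie
algebra `𝔞`) act smoothly and locally freely on a compact manifold `M` via commuting
flows, with flow action `φ : 𝔞 → M → M` and derivative cocycle `d` (satisfying the
chain rule `d(a+b)(x) = d(a)(φ(b)x) ∘ d(b)(x)`, with uniformly small distortion for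
small times — a consequence of compactness of `M`), and let `Es`, `Eu` be a continuous
invariant stable/unstable splitting.  If some `H₀ ∈ 𝔞` is transversely hyperbolic with
this splitting, then the set of all `H ∈ 𝔞` that are transversely hyperbolic with the
same splitting is an open convex cone in `𝔞` containing `H₀`. -/
theorem weyl_chamber_open_convex_cone
    {𝔞 M F : Type*} [NormedAddCommGroup 𝔞] [NormedSpace ℝ 𝔞]
    [NormedAddCommGroup F] [NormedSpace ℝ F]
    (φ : 𝔞 → M → M)
    (hφ0 : φ 0 = id) (hφ : ∀ (a b : 𝔞) (x : M), φ (a + b) x = φ a (φ b x))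
    (d : 𝔞 → M → (F →L[ℝ] F))
    (hd0 : ∀ x : M, d 0 x = ContinuousLinearMap.id ℝ F)
    (hd : ∀ (a b : 𝔞) (x : M), d (a + b) x = (d a (φ b x)).comp (d b x))
    (Es Eu : M → Submodule ℝ F)
    (hEs : ∀ (a : 𝔞) (x : M), ∀ w ∈ Es x, d a x w ∈ Es (φ a x))
    (hEu : ∀ (a : 𝔞) (x : M), ∀ w ∈ Eu x, d a x w ∈ Eu (φ a x))
    (hsmall : ∀ ε > (0 : ℝ), ∃ η > (0 : ℝ), ∀ a : 𝔞, ‖a‖ < η →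
      ∀ (x : M) (w : F), ‖d a x w‖ ≤ (1 + ε) * ‖w‖)
    (H₀ : 𝔞) (hH₀ : TransverselyHyperbolic φ d Es Eu H₀) :
    H₀ ∈ {H : 𝔞 | TransverselyHyperbolic φ d Es Eu H} ∧
    IsOpen {H : 𝔞 | TransverselyHyperbolic φ d Es Eu H} ∧
    Convex ℝ {H : 𝔞 | TransverselyHyperbolic φ d Es Eu H} ∧
    ∀ c : ℝ, 0 < c → ∀ H, TransverselyHyperbolic φ d Es Eu H →
      TransverselyHyperbolic φ d Es Eu (c • H) :=
  weyl_chamber_open_convex_cone_general φ d hd Es Eu hEs hEu hsmall H₀ hH₀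
end

section
/- Let 𝔊 be a finite connected symmetric graph without loops and without dead ends, with edge Laplacian Δ_𝔈 f(e) = Σ_{e': ι(e')=τ(e), τ(e')≠ι(e)} f(e') acting on functions on directed edges. Then the dimension of the eigenspace {Δ_𝔈 = 1} equals the cyclomatic number c(𝔊) if c(𝔊) ≠ 1, and equals c(𝔊) + 1 = 2 if c(𝔊) = 1. -/
/-- The set of directed edges of a graph: ordered pairs of adjacent vertices. -/
abbrev DirEdge {V : Type*} (G : SimpleGraph V) := {p : V × V // G.Adj p.1 p.2}

/-- The edge Laplacian `Δ_𝔈 f (e) = Σ_{e' : ι(e') = τ(e), τ(e') ≠ ι(e)} f e'`,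
summing `f` over the directed edges `e'` continuing `e` without backtracking. -/
noncomputable def edgeLaplacian {V : Type*} [Fintype V] [DecidableEq V]
    (G : SimpleGraph V) [DecidableRel G.Adj] :
    (DirEdge G → ℂ) →ₗ[ℂ] (DirEdge G → ℂ) where
  toFun f e := ∑ e' ∈ Finset.univ.filter
    (fun e' : DirEdge G => e'.1.1 = e.1.2 ∧ e'.1.2 ≠ e.1.1), f e'
  map_add' f g := by funext e; simp [Finset.sum_add_distrib]
  map_smul' c f := by funext e; simp [Finset.mul_sum]

/-!
Write `div f v` for the sum of `f` over the directed edges leaving `v`. The continuations of `e`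
are the edges leaving its head other than `e.rev`, so `Δ f = f` says
`f e + f e.rev = div f (head e)`. The left side is symmetric in the endpoints of `e`, hence on a
connected graph `div f` is a constant `s` and `f + f ∘ rev = s`. The flux `s` is a linear
functional on the eigenspace whose kernel is the cycle space of antisymmetric divergence-free
functions; divergence maps the antisymmetric functions (dimension `|E|/2`) onto the functions of
zero sum (dimension `|V| - 1`), so the cycle space has dimension `c`. Summing `f + f ∘ rev = s`
over all edges gives `|E| s = 2 |V| s`, so `s = 0` unless `|E| = 2 |V|`, i.e. `c = 1`; in that
case `1/2` plus an antisymmetric correction has flux `1`, which adds one dimension.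
-/

open Module

theorem Submodule.finrank_map_add_finrank_inf_ker {K M N : Type*} [DivisionRing K]
    [AddCommGroup M] [Module K M] [AddCommGroup N] [Module K N] [FiniteDimensional K M]
    (p : Submodule K M) (f : M →ₗ[K] N) :
    finrank K (p.map f) + finrank K ↥(p ⊓ LinearMap.ker f) = finrank K p := by
  rw [← (comapSubtypeEquivOfLe (inf_le_left : p ⊓ LinearMap.ker f ≤ p)).finrank_eq,
    comap_inf, comap_subtype_self, top_inf_eq, ← LinearMap.ker_domRestrict,
    ← LinearMap.range_domRestrict]
  exact LinearMap.finrank_range_add_finrank_ker (f.domRestrict p)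

section SumZero

variable (V : Type*) [Fintype V]

noncomputable def sumZeroFunctions : Submodule ℂ (V → ℂ) :=
  LinearMap.ker (∑ v : V, LinearMap.proj v)

variable {V}

theorem mem_sumZeroFunctions {φ : V → ℂ} : φ ∈ sumZeroFunctions V ↔ ∑ v, φ v = 0 := by
  simp [sumZeroFunctions, LinearMap.sum_apply]

theorem finrank_sumZeroFunctions [Nonempty V] :
    finrank ℂ (sumZeroFunctions V) + 1 = Fintype.card V := by
  classical
  obtain ⟨v₀⟩ := ‹Nonempty V›
  let total : (V → ℂ) →ₗ[ℂ] ℂ := ∑ v : V, LinearMap.proj v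
  have hsurj : LinearMap.range total = ⊤ :=
    LinearMap.range_eq_top.mpr fun x => ⟨Pi.single v₀ x, by simp [total, LinearMap.sum_apply]⟩
  have h := LinearMap.finrank_range_add_finrank_ker total
  rw [hsurj, finrank_top, finrank_self, finrank_fintype_fun_eq_card] at h
  change finrank ℂ (LinearMap.ker total) + 1 = _
  omega

end SumZero

section Involution

variable {α : Type*} [LinearOrder α] {τ : α → α}

theorem Function.Involutive.apply_lt_apply_apply (hτ : Function.Involutive τ)
    (hfree : ∀ a, τ a ≠ a) {a : α} (h : ¬ a < τ a) : τ a < τ (τ a) := by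
  rw [hτ a]
  exact lt_of_le_of_ne (not_lt.mp h) (hfree a)

theorem Function.Involutive.two_mul_card_lt_apply [Fintype α] (hτ : Function.Involutive τ)
    (hfree : ∀ a, τ a ≠ a) : 2 * Fintype.card {a // a < τ a} = Fintype.card α := by
  have hswap : {a // ¬ a < τ a} ≃ {a // a < τ a} :=
    { toFun := fun a => ⟨τ a, hτ.apply_lt_apply_apply hfree a.2⟩
      invFun := fun a => ⟨τ a, by rw [hτ a]; exact not_lt.mpr a.2.le⟩
      left_inv := fun a => Subtype.ext (hτ a)
      right_inv := fun a => Subtype.ext (hτ a) }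
  have := Fintype.card_subtype_compl (fun a => a < τ a)
  have := Fintype.card_subtype_le (fun a => a < τ a)
  have := Fintype.card_congr hswap
  omega

end Involution

section AntiInvariant

variable (K : Type*) {α : Type*} [Field K]

def antiInvariantFunctions (τ : α → α) : Submodule K (α → K) where
  carrier := {f | ∀ a, f (τ a) = -f a}
  add_mem' hf hg a := by simp only [Pi.add_apply, hf a, hg a, neg_add]
  zero_mem' a := by simp
  smul_mem' c f hf a := by simp [hf a]

variable {K} {τ : α → α}

theorem single_sub_single_mem_antiInvariantFunctions [DecidableEq α]
    (hτ : Function.Involutive τ) (a : α) :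
    Pi.single a 1 - Pi.single (τ a) 1 ∈ antiInvariantFunctions K τ := by
  intro b
  simp [Pi.single_apply, hτ.eq_iff, hτ a]

def antiInvariantFunctionsEquiv [LinearOrder α] (hτ : Function.Involutive τ)
    (hfree : ∀ a, τ a ≠ a) :
    antiInvariantFunctions K τ ≃ₗ[K] ({a // a < τ a} → K) where
  toFun f a := f.1 a
  map_add' _ _ := rfl
  map_smul' _ _ := rfl
  invFun g := ⟨fun a => if h : a < τ a then g ⟨a, h⟩
      else -g ⟨τ a, hτ.apply_lt_apply_apply hfree h⟩, by
    intro a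
    dsimp only
    by_cases h : a < τ a
    · rw [dif_neg (not_lt.mpr ((hτ a).symm ▸ h.le)), dif_pos h]
      simp only [hτ a]
    · rw [dif_neg h, dif_pos (hτ.apply_lt_apply_apply hfree h), neg_neg]⟩
  left_inv f := by
    ext a
    dsimp only
    split_ifs with h
    · rfl
    · rw [f.2 a, neg_neg]
  right_inv g := by
    funext a
    exact dif_pos a.2

theorem two_mul_finrank_antiInvariantFunctions [Fintype α] (hτ : Function.Involutive τ)
    (hfree : ∀ a, τ a ≠ a) :
    2 * finrank K (antiInvariantFunctions K τ) = Fintype.card α := by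
  let _ : LinearOrder α := LinearOrder.lift' _ (Fintype.equivFin α).injective
  rw [(antiInvariantFunctionsEquiv hτ hfree).finrank_eq, finrank_fintype_fun_eq_card,
    hτ.two_mul_card_lt_apply hfree]

end AntiInvariant

theorem SimpleGraph.Reachable.eq_of_forall_adj {V β : Type*} {G : SimpleGraph V} {g : V → β}
    (hg : ∀ u w, G.Adj u w → g u = g w) {u w : V} (h : G.Reachable u w) : g u = g w := by
  obtain ⟨p⟩ := h
  induction p with
  | nil => rfl
  | cons hadj _ ih => exact (hg _ _ hadj).trans ih

namespace DirEdge

variable {V : Type*} {G : SimpleGraph V}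

def rev (e : DirEdge G) : DirEdge G := ⟨(e.1.2, e.1.1), e.2.symm⟩

theorem rev_involutive : Function.Involutive (rev (G := G)) := fun _ => rfl

theorem rev_ne (e : DirEdge G) : e.rev ≠ e := fun h => e.2.ne (congrArg (·.1.2) h)

theorem sum_add_comp_rev [Fintype V] [DecidableRel G.Adj] (f : DirEdge G → ℂ) :
    ∑ e, (f e + f e.rev) = 2 * ∑ e, f e := by
  rw [Finset.sum_add_distrib,
    Fintype.sum_equiv rev_involutive.toPerm (fun e => f e.rev) f (fun _ => rfl)]
  ring

end DirEdge

open DirEdge Module.End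

section EdgeLaplacian

variable {V : Type*} [Fintype V] [DecidableEq V] {G : SimpleGraph V} [DecidableRel G.Adj]

variable (G) in
noncomputable def edgeDivergence : (DirEdge G → ℂ) →ₗ[ℂ] (V → ℂ) where
  toFun f v := ∑ e ∈ Finset.univ.filter (fun e : DirEdge G => e.1.1 = v), f e
  map_add' f g := by funext v; simp [Finset.sum_add_distrib]
  map_smul' c f := by funext v; simp [Finset.mul_sum]

theorem edgeDivergence_apply (f : DirEdge G → ℂ) (v : V) :
    edgeDivergence G f v = ∑ e ∈ Finset.univ.filter (fun e : DirEdge G => e.1.1 = v), f e :=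
  rfl

theorem sum_edgeDivergence (f : DirEdge G → ℂ) : ∑ v, edgeDivergence G f v = ∑ e, f e :=
  Finset.sum_fiberwise _ _ _

theorem edgeLaplacian_apply (f : DirEdge G → ℂ) (e : DirEdge G) :
    edgeLaplacian G f e = edgeDivergence G f e.1.2 - f e.rev := by
  have hback : ((Finset.univ.filter fun e' : DirEdge G => e'.1.1 = e.1.2).filter
      fun e' => ¬e'.1.2 ≠ e.1.1) = {e.rev} := by
    ext e'
    simp only [Finset.mem_filter, Finset.mem_univ, true_and, not_not, Finset.mem_singleton]
    exact ⟨fun h => Subtype.ext (Prod.ext h.1 h.2), fun h => h ▸ ⟨rfl, rfl⟩⟩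
  rw [eq_sub_iff_add_eq, edgeDivergence_apply,
    ← Finset.sum_filter_add_sum_filter_not _ (fun e' : DirEdge G => e'.1.2 ≠ e.1.1),
    Finset.filter_filter, hback, Finset.sum_singleton]
  rfl

theorem edgeDivergence_single_sub_single (e : DirEdge G) :
    edgeDivergence G (Pi.single e 1 - Pi.single e.rev 1) =
      Pi.single e.1.1 1 - Pi.single e.1.2 1 := by
  funext v
  simp [edgeDivergence_apply, Finset.sum_sub_distrib, Pi.single_apply, rev, eq_comm]

theorem single_sub_single_mem_map_edgeDivergence {u w : V} (h : G.Reachable u w) :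
    Pi.single u 1 - Pi.single w 1 ∈ (antiInvariantFunctions ℂ rev).map (edgeDivergence G) := by
  obtain ⟨p⟩ := h
  induction p with
  | nil => simp
  | @cons u x w hadj _ ih =>
    have hedge := Submodule.mem_map_of_mem (f := edgeDivergence G)
      (single_sub_single_mem_antiInvariantFunctions rev_involutive (⟨(u, x), hadj⟩ : DirEdge G))
    rw [edgeDivergence_single_sub_single] at hedge
    simpa using add_mem hedge ih

theorem map_edgeDivergence_antiInvariantFunctions (hconn : G.Connected) :
    (antiInvariantFunctions ℂ rev).map (edgeDivergence G) = sumZeroFunctions V := by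
  apply le_antisymm
  · rintro _ ⟨f, hf, rfl⟩
    have h := sum_add_comp_rev f
    simp only [hf _, add_neg_cancel, Finset.sum_const_zero] at h
    rw [mem_sumZeroFunctions, sum_edgeDivergence]
    linear_combination -h / 2
  · intro φ hφ
    obtain ⟨v₀⟩ := hconn.nonempty
    have hφ' : φ = ∑ v, φ v • (Pi.single v 1 - Pi.single v₀ 1) := by
      simpa [smul_sub, Finset.sum_sub_distrib, ← Finset.sum_smul, mem_sumZeroFunctions.mp hφ]
        using pi_eq_sum_univ' φ
    rw [hφ']
    exact sum_mem fun v _ =>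
      Submodule.smul_mem _ _ (single_sub_single_mem_map_edgeDivergence (hconn v v₀))

variable (G) in
noncomputable def cycleSpace : Submodule ℂ (DirEdge G → ℂ) :=
  antiInvariantFunctions ℂ rev ⊓ LinearMap.ker (edgeDivergence G)

theorem finrank_cycleSpace (hconn : G.Connected) {c : ℕ}
    (hc : 2 * c + 2 * Fintype.card V = Fintype.card (DirEdge G) + 2) :
    finrank ℂ (cycleSpace G) = c := by
  have := hconn.nonempty
  have hA := two_mul_finrank_antiInvariantFunctions (K := ℂ) (rev_involutive (G := G)) rev_ne
  have hsplit :=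
    (antiInvariantFunctions ℂ rev).finrank_map_add_finrank_inf_ker (edgeDivergence G)
  have hV := finrank_sumZeroFunctions (V := V)
  rw [map_edgeDivergence_antiInvariantFunctions hconn] at hsplit
  rw [cycleSpace]
  omega

theorem mem_eigenspace_one_iff (hconn : G.Connected) {f : DirEdge G → ℂ} :
    f ∈ eigenspace (edgeLaplacian G) 1 ↔
      ∃ s, (∀ e, f e + f e.rev = s) ∧ ∀ v, edgeDivergence G f v = s := by
  simp only [mem_eigenspace_iff, one_smul, funext_iff, edgeLaplacian_apply, sub_eq_iff_eq_add]
  constructor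
  · intro h
    obtain ⟨v₀⟩ := hconn.nonempty
    -- `f e + f e.rev` is symmetric in the endpoints of `e`
    have hconst : ∀ v, edgeDivergence G f v = edgeDivergence G f v₀ := fun v =>
      (hconn v v₀).eq_of_forall_adj fun u w hadj => by
        rw [h (⟨(w, u), hadj.symm⟩ : DirEdge G), h ⟨(u, w), hadj⟩, add_comm]; rfl
    exact ⟨_, fun e => by rw [← hconst e.1.2, h e, add_comm], hconst⟩
  · rintro ⟨s, hrev, hdiv⟩ e
    rw [hdiv, ← hrev e, add_comm]

theorem card_mul_eq_two_mul_card_mul {f : DirEdge G → ℂ} {s : ℂ}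
    (hrev : ∀ e, f e + f e.rev = s) (hdiv : ∀ v, edgeDivergence G f v = s) :
    Fintype.card (DirEdge G) * s = 2 * Fintype.card V * s := by
  calc Fintype.card (DirEdge G) * s = ∑ e, (f e + f e.rev) := by simp [hrev]
    _ = 2 * ∑ v, edgeDivergence G f v := by rw [sum_add_comp_rev, sum_edgeDivergence]
    _ = 2 * Fintype.card V * s := by simp [hdiv, mul_assoc]

theorem eigenspace_one_inf_ker_eq_cycleSpace (hconn : G.Connected) (v₀ : V) :
    eigenspace (edgeLaplacian G) 1 ⊓ LinearMap.ker (LinearMap.proj v₀ ∘ₗ edgeDivergence G) =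
      cycleSpace G := by
  ext f
  simp only [Submodule.mem_inf, mem_eigenspace_one_iff hconn, LinearMap.mem_ker,
    LinearMap.comp_apply, LinearMap.proj_apply, cycleSpace]
  constructor
  · rintro ⟨⟨s, hrev, hdiv⟩, h₀⟩
    obtain rfl : s = 0 := (hdiv v₀).symm.trans h₀
    exact ⟨fun e => eq_neg_of_add_eq_zero_left ((add_comm _ _).trans (hrev e)), funext hdiv⟩
  · rintro ⟨hanti, hker⟩
    exact ⟨⟨0, fun e => by rw [hanti e, add_neg_cancel], fun v => congrFun hker v⟩,
      congrFun hker v₀⟩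

theorem map_eigenspace_one_eq_bot (hconn : G.Connected) (v₀ : V)
    (hcard : Fintype.card (DirEdge G) ≠ 2 * Fintype.card V) :
    (eigenspace (edgeLaplacian G) 1).map (LinearMap.proj v₀ ∘ₗ edgeDivergence G) = ⊥ := by
  rw [Submodule.eq_bot_iff]
  rintro _ ⟨f, hf, rfl⟩
  obtain ⟨s, hrev, hdiv⟩ := (mem_eigenspace_one_iff hconn).mp hf
  have hcard' : (Fintype.card (DirEdge G) : ℂ) ≠ 2 * Fintype.card V := by exact_mod_cast hcard
  obtain rfl : s = 0 := by
    by_contra hs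
    exact hcard' (mul_right_cancel₀ hs (card_mul_eq_two_mul_card_mul hrev hdiv))
  exact hdiv v₀

theorem exists_add_comp_rev_eq_one_and_edgeDivergence_eq_one (hconn : G.Connected)
    (hcard : Fintype.card (DirEdge G) = 2 * Fintype.card V) :
    ∃ f : DirEdge G → ℂ, (∀ e, f e + f e.rev = 1) ∧ ∀ v, edgeDivergence G f v = 1 := by
  -- correct the constant function `1 / 2` by an antisymmetric function
  set ψ : V → ℂ := 1 - edgeDivergence G (fun _ => 1 / 2)
  have hψ : ψ ∈ sumZeroFunctions V := by
    rw [mem_sumZeroFunctions]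
    simp [ψ, Finset.sum_sub_distrib, sum_edgeDivergence, hcard]
    ring
  rw [← map_edgeDivergence_antiInvariantFunctions hconn] at hψ
  obtain ⟨h, hanti, hdiv⟩ := hψ
  refine ⟨(fun _ => 1 / 2) + h, fun e => ?_, fun v => ?_⟩
  · simp only [Pi.add_apply, hanti e]
    ring
  · rw [map_add, hdiv]
    simp [ψ]

theorem map_eigenspace_one_eq_top (hconn : G.Connected) (v₀ : V)
    (hcard : Fintype.card (DirEdge G) = 2 * Fintype.card V) :
    (eigenspace (edgeLaplacian G) 1).map (LinearMap.proj v₀ ∘ₗ edgeDivergence G) = ⊤ := by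
  obtain ⟨f, hrev, hdiv⟩ := exists_add_comp_rev_eq_one_and_edgeDivergence_eq_one hconn hcard
  have hf : f ∈ eigenspace (edgeLaplacian G) 1 :=
    (mem_eigenspace_one_iff hconn).mpr ⟨1, hrev, hdiv⟩
  exact eq_top_iff.mpr fun x _ => ⟨x • f, Submodule.smul_mem _ x hf, by simp [hdiv]⟩

end EdgeLaplacian

theorem dim_edge_laplacian_eigenspace_one_general
    {V : Type*} [Fintype V] [DecidableEq V]
    (G : SimpleGraph V) [DecidableRel G.Adj]
    (hconn : G.Connected)
    (c : ℕ) (hc : 2 * c + 2 * Fintype.card V = Fintype.card (DirEdge G) + 2) :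
    Module.finrank ℂ ↥(Module.End.eigenspace (edgeLaplacian G) (1 : ℂ)) =
      if c = 1 then c + 1 else c := by
  obtain ⟨v₀⟩ := hconn.nonempty
  have hsplit := (eigenspace (edgeLaplacian G) 1).finrank_map_add_finrank_inf_ker
    (LinearMap.proj v₀ ∘ₗ edgeDivergence G)
  rw [eigenspace_one_inf_ker_eq_cycleSpace hconn, finrank_cycleSpace hconn hc] at hsplit
  split_ifs with hc1
  · rw [map_eigenspace_one_eq_top hconn v₀ (by omega), finrank_top, finrank_self] at hsplit
    omega
  · rw [map_eigenspace_one_eq_bot hconn v₀ (by omega), finrank_bot] at hsplit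
    omega

/-- **Eigenvalue `1` of the edge Laplacian and the cyclomatic number.**
Let `𝔊` be a finite connected (symmetric, loopless) graph without dead ends (every
vertex has at least two neighbors), with cyclomatic number
`c = #(undirected edges) − #(vertices) + 1` (so `2c + 2|V| = #(directed edges) + 2`).
Then the eigenspace `{Δ_𝔈 = 1}` of the edge Laplacian has dimension `c` if `c ≠ 1`,
and dimension `c + 1 = 2` if `c = 1`. -/
theorem dim_edge_laplacian_eigenspace_one
    {V : Type*} [Fintype V] [DecidableEq V]
    (G : SimpleGraph V) [DecidableRel G.Adj]
    (hconn : G.Connected)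
    (hdeg : ∀ x : V, 1 < G.degree x)
    (c : ℕ) (hc : 2 * c + 2 * Fintype.card V = Fintype.card (DirEdge G) + 2) :
    Module.finrank ℂ ↥(Module.End.eigenspace (edgeLaplacian G) (1 : ℂ)) =
      if c = 1 then c + 1 else c :=
  dim_edge_laplacian_eigenspace_one_general G hconn c hc
end
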